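/- arXiv:2211.09868 — 6 statements merged into one kernel-verified Lean document; each statement's English description precedes it below -/
import Mathlib

section
/- There exists no 3-dimensional essentially conformally symmetric gradient ρ-Einstein soliton. Precisely: there are no smooth functions f : ℝ³ → ℝ and a : ℝ → ℝ and no real number λ such that the system (W) holds at every point (t,x,y) ∈ ℝ³, i.e. such that f_tt = 0, f_tx = 0, f_ty = λ, f_xx = λ, f_xy − (1/2)(3x² + a(y)) f_t = 0, and f_yy − (1/2) a'(y) x f_t + (1/2)(3x² + a(y)) f_x − x/3 = λ (x³ + a(y)x) for all (t,x,y). -/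
/-- Partial derivative in the first coordinate `t` of `f : ℝ³ → ℝ` at `(t,x,y)`. -/
noncomputable def pdt (f : ℝ × ℝ × ℝ → ℝ) (t x y : ℝ) : ℝ :=
  deriv (fun s => f (s, x, y)) t

/-- Partial derivative in the second coordinate `x`. -/
noncomputable def pdx (f : ℝ × ℝ × ℝ → ℝ) (t x y : ℝ) : ℝ :=
  deriv (fun s => f (t, s, y)) x

/-- Partial derivative in the third coordinate `y`. -/
noncomputable def pdy (f : ℝ × ℝ × ℝ → ℝ) (t x y : ℝ) : ℝ :=
  deriv (fun s => f (t, x, s)) y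

noncomputable def pdtt (f : ℝ × ℝ × ℝ → ℝ) (t x y : ℝ) : ℝ :=
  deriv (fun s => pdt f s x y) t

noncomputable def pdtx (f : ℝ × ℝ × ℝ → ℝ) (t x y : ℝ) : ℝ :=
  deriv (fun s => pdt f t s y) x

noncomputable def pdty (f : ℝ × ℝ × ℝ → ℝ) (t x y : ℝ) : ℝ :=
  deriv (fun s => pdt f t x s) y

noncomputable def pdxx (f : ℝ × ℝ × ℝ → ℝ) (t x y : ℝ) : ℝ :=
  deriv (fun s => pdx f t s y) x

noncomputable def pdxy (f : ℝ × ℝ × ℝ → ℝ) (t x y : ℝ) : ℝ :=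
  deriv (fun s => pdx f t x s) y

noncomputable def pdyy (f : ℝ × ℝ × ℝ → ℝ) (t x y : ℝ) : ℝ :=
  deriv (fun s => pdy f t x s) y

/-- The function `p ↦ fderiv ℝ g p v` is smooth when `g` is. -/
lemma smooth_fderiv_apply (g : ℝ × ℝ × ℝ → ℝ) (hg : ContDiff ℝ (⊤ : ℕ∞) g) (v : ℝ × ℝ × ℝ) :
    ContDiff ℝ (⊤ : ℕ∞) (fun p => fderiv ℝ g p v) :=
  (ContinuousLinearMap.apply ℝ ℝ v).contDiff.comp (hg.fderiv_right (by simp))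

lemma hasDerivAt1 (g : ℝ × ℝ × ℝ → ℝ) (hg : ContDiff ℝ (⊤ : ℕ∞) g) (t x y : ℝ) :
    HasDerivAt (fun s => g (s, x, y)) (fderiv ℝ g (t, x, y) (1, 0, 0)) t := by
  have hc : HasDerivAt (fun s : ℝ => (s, x, y)) ((1 : ℝ), ((0 : ℝ), (0 : ℝ))) t :=
    (hasDerivAt_id t).prodMk (hasDerivAt_const t (x, y))
  exact ((hg.differentiable (by simp) (t, x, y)).hasFDerivAt).comp_hasDerivAt t hc

lemma hasDerivAt2 (g : ℝ × ℝ × ℝ → ℝ) (hg : ContDiff ℝ (⊤ : ℕ∞) g) (t x y : ℝ) :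
    HasDerivAt (fun s => g (t, s, y)) (fderiv ℝ g (t, x, y) (0, 1, 0)) x := by
  have hc : HasDerivAt (fun s : ℝ => (t, s, y)) ((0 : ℝ), ((1 : ℝ), (0 : ℝ))) x :=
    (hasDerivAt_const x t).prodMk ((hasDerivAt_id x).prodMk (hasDerivAt_const x y))
  exact ((hg.differentiable (by simp) (t, x, y)).hasFDerivAt).comp_hasDerivAt x hc

lemma hasDerivAt3 (g : ℝ × ℝ × ℝ → ℝ) (hg : ContDiff ℝ (⊤ : ℕ∞) g) (t x y : ℝ) :
    HasDerivAt (fun s => g (t, x, s)) (fderiv ℝ g (t, x, y) (0, 0, 1)) y := by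
  have hc : HasDerivAt (fun s : ℝ => (t, x, s)) ((0 : ℝ), ((0 : ℝ), (1 : ℝ))) y :=
    (hasDerivAt_const y t).prodMk ((hasDerivAt_const y x).prodMk (hasDerivAt_id y))
  exact ((hg.differentiable (by simp) (t, x, y)).hasFDerivAt).comp_hasDerivAt y hc

lemma const_of_hasDerivAt_zero {g : ℝ → ℝ} (h : ∀ s, HasDerivAt g 0 s) (x y : ℝ) :
    g x = g y :=
  is_const_of_deriv_eq_zero (fun s => (h s).differentiableAt) (fun s => (h s).deriv) x y

lemma linear_of_hasDerivAt_const {g : ℝ → ℝ} {c : ℝ} (h : ∀ s, HasDerivAt g c s) (x : ℝ) :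
    g x = g 0 + c * x := by
  have h' : ∀ s, HasDerivAt (fun u => g u - c * u) 0 s := by
    intro s
    have := (h s).fun_sub (HasDerivAt.const_mul c (hasDerivAt_id s))
    simpa using this
  have hx := const_of_hasDerivAt_zero h' x 0
  simp only [mul_zero, sub_zero] at hx
  linarith

/-- There exists no 3-dimensional essentially conformally symmetric gradient
ρ-Einstein soliton: no smooth `f : ℝ³ → ℝ`, smooth `a : ℝ → ℝ` and `lam ∈ ℝ`
satisfy the system (W) at every point `(t,x,y)`. -/
theorem no_essentially_conformally_symmetric_gradient_rho_Einstein_soliton :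
    ¬ ∃ (f : ℝ × ℝ × ℝ → ℝ) (a : ℝ → ℝ) (lam : ℝ),
      ContDiff ℝ (⊤ : ℕ∞) f ∧ ContDiff ℝ (⊤ : ℕ∞) a ∧
      (∀ t x y : ℝ,
        pdtt f t x y = 0 ∧
        pdtx f t x y = 0 ∧
        pdty f t x y = lam ∧
        pdxx f t x y = lam ∧
        pdxy f t x y - (1/2) * (3 * x^2 + a y) * pdt f t x y = 0 ∧
        pdyy f t x y - (1/2) * (deriv a y) * x * pdt f t x y
            + (1/2) * (3 * x^2 + a y) * pdx f t x y - x/3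
          = lam * (x^3 + a y * x)) := by
  rintro ⟨f, a, lam, hf, ha, H⟩
  have hG1 : ContDiff ℝ (⊤ : ℕ∞) (fun p => fderiv ℝ f p (1, 0, 0)) :=
    smooth_fderiv_apply f hf _
  have hG2 : ContDiff ℝ (⊤ : ℕ∞) (fun p => fderiv ℝ f p (0, 1, 0)) :=
    smooth_fderiv_apply f hf _
  have pdt_eq : ∀ t x y : ℝ, pdt f t x y = fderiv ℝ f (t, x, y) (1, 0, 0) :=
    fun t x y => (hasDerivAt1 f hf t x y).deriv
  have pdx_eq : ∀ t x y : ℝ, pdx f t x y = fderiv ℝ f (t, x, y) (0, 1, 0) :=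
    fun t x y => (hasDerivAt2 f hf t x y).deriv
  -- HasDerivAt statements for the second partials
  have Ht1 : ∀ t x y : ℝ, HasDerivAt (fun s => pdt f s x y) (pdtt f t x y) t := by
    intro t x y
    have he : (fun s => pdt f s x y) = fun s => fderiv ℝ f (s, x, y) (1, 0, 0) :=
      funext fun s => pdt_eq s x y
    have h := hasDerivAt1 _ hG1 t x y
    have hv : pdtt f t x y
        = fderiv ℝ (fun p => fderiv ℝ f p (1, 0, 0)) (t, x, y) (1, 0, 0) := by
      show deriv (fun s => pdt f s x y) t = _
      rw [he]; exact h.deriv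
    rw [he, hv]; exact h
  have Ht2 : ∀ t x y : ℝ, HasDerivAt (fun s => pdt f t s y) (pdtx f t x y) x := by
    intro t x y
    have he : (fun s => pdt f t s y) = fun s => fderiv ℝ f (t, s, y) (1, 0, 0) :=
      funext fun s => pdt_eq t s y
    have h := hasDerivAt2 _ hG1 t x y
    have hv : pdtx f t x y
        = fderiv ℝ (fun p => fderiv ℝ f p (1, 0, 0)) (t, x, y) (0, 1, 0) := by
      show deriv (fun s => pdt f t s y) x = _
      rw [he]; exact h.deriv
    rw [he, hv]; exact h
  have Ht3 : ∀ t x y : ℝ, HasDerivAt (fun s => pdt f t x s) (pdty f t x y) y := by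
    intro t x y
    have he : (fun s => pdt f t x s) = fun s => fderiv ℝ f (t, x, s) (1, 0, 0) :=
      funext fun s => pdt_eq t x s
    have h := hasDerivAt3 _ hG1 t x y
    have hv : pdty f t x y
        = fderiv ℝ (fun p => fderiv ℝ f p (1, 0, 0)) (t, x, y) (0, 0, 1) := by
      show deriv (fun s => pdt f t x s) y = _
      rw [he]; exact h.deriv
    rw [he, hv]; exact h
  have Hx2 : ∀ t x y : ℝ, HasDerivAt (fun s => pdx f t s y) (pdxx f t x y) x := by
    intro t x y
    have he : (fun s => pdx f t s y) = fun s => fderiv ℝ f (t, s, y) (0, 1, 0) :=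
      funext fun s => pdx_eq t s y
    have h := hasDerivAt2 _ hG2 t x y
    have hv : pdxx f t x y
        = fderiv ℝ (fun p => fderiv ℝ f p (0, 1, 0)) (t, x, y) (0, 1, 0) := by
      show deriv (fun s => pdx f t s y) x = _
      rw [he]; exact h.deriv
    rw [he, hv]; exact h
  have Hx3 : ∀ t x y : ℝ, HasDerivAt (fun s => pdx f t x s) (pdxy f t x y) y := by
    intro t x y
    have he : (fun s => pdx f t x s) = fun s => fderiv ℝ f (t, x, s) (0, 1, 0) :=
      funext fun s => pdx_eq t x s
    have h := hasDerivAt3 _ hG2 t x y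
    have hv : pdxy f t x y
        = fderiv ℝ (fun p => fderiv ℝ f p (0, 1, 0)) (t, x, y) (0, 0, 1) := by
      show deriv (fun s => pdx f t x s) y = _
      rw [he]; exact h.deriv
    rw [he, hv]; exact h
  -- Step: pdt f t x y = pdt f 0 0 0 + lam * y
  have hpdt : ∀ t x y : ℝ, pdt f t x y = pdt f 0 0 0 + lam * y := by
    intro t x y
    have e1 : pdt f t x y = pdt f 0 x y :=
      const_of_hasDerivAt_zero (fun s => (H s x y).1 ▸ Ht1 s x y) t 0
    have e2 : pdt f 0 x y = pdt f 0 0 y :=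
      const_of_hasDerivAt_zero (fun s => (H 0 s y).2.1 ▸ Ht2 0 s y) x 0
    have e3 : pdt f 0 0 y = pdt f 0 0 0 + lam * y :=
      linear_of_hasDerivAt_const (fun s => (H 0 0 s).2.2.1 ▸ Ht3 0 0 s) y
    rw [e1, e2, e3]
  -- Step: pdx f t x y = pdx f t 0 y + lam * x
  have hpdx_lin : ∀ t x y : ℝ, pdx f t x y = pdx f t 0 y + lam * x := by
    intro t x y
    exact linear_of_hasDerivAt_const (fun s => (H t s y).2.2.2.1 ▸ Hx2 t s y) x
  -- Step: pdxy is independent of x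
  have hxy : ∀ t x y : ℝ, pdxy f t x y = pdxy f t 0 y := by
    intro t x y
    show deriv (fun s => pdx f t x s) y = deriv (fun s => pdx f t 0 s) y
    have he : (fun s => pdx f t x s) = fun s => pdx f t 0 s + lam * x :=
      funext fun s => hpdx_lin t x s
    rw [he, deriv_add_const]
  -- Step: lam = 0 and pdt f 0 0 0 = 0
  have hxx : ∀ x y : ℝ,
      (1/2) * (3 * x^2 + a y) * (pdt f 0 0 0 + lam * y)
        = (1/2) * (a y) * (pdt f 0 0 0 + lam * y) := by
    intro x y
    have h1 := (H 0 x y).2.2.2.2.1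
    have h2 := (H 0 0 y).2.2.2.2.1
    rw [hpdt 0 x y, hxy 0 x y] at h1
    rw [hpdt 0 0 y] at h2
    linear_combination h2 - h1
  have hc : pdt f 0 0 0 = 0 := by linear_combination (2/3 : ℝ) * (hxx 1 0)
  have hlam : lam = 0 := by linear_combination (2/3 : ℝ) * (hxx 1 1) - hc
  have hpdt0 : ∀ t x y : ℝ, pdt f t x y = 0 := by
    intro t x y; rw [hpdt t x y, hc, hlam]; ring
  -- Step: pdx is globally constant (at t = 0)
  have hxy0 : ∀ y : ℝ, pdxy f 0 0 y = 0 := by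
    intro y
    have h := (H 0 0 y).2.2.2.2.1
    rw [hpdt0 0 0 y] at h
    linarith
  have hk : ∀ y : ℝ, pdx f 0 0 y = pdx f 0 0 0 := by
    refine fun y => const_of_hasDerivAt_zero (fun s => ?_) y 0
    have h := Hx3 0 0 s
    rwa [hxy0 s] at h
  have hpdxk : ∀ x y : ℝ, pdx f 0 x y = pdx f 0 0 0 := by
    intro x y
    rw [hpdx_lin 0 x y, hlam, hk y]; ring
  -- Step: f (0,x,y) = f (0,0,y) + k x
  have hflin : ∀ x y : ℝ, f (0, x, y) = f (0, 0, y) + pdx f 0 0 0 * x := by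
    intro x y
    have hD : ∀ s : ℝ, HasDerivAt (fun u => f (0, u, y)) (pdx f 0 0 0) s := by
      intro s
      have h := hasDerivAt2 f hf 0 s y
      rw [← pdx_eq 0 s y, hpdxk s y] at h
      exact h
    exact linear_of_hasDerivAt_const hD x
  -- Step: pdy and pdyy are independent of x (at t = 0)
  have hpdy : ∀ x y : ℝ, pdy f 0 x y = pdy f 0 0 y := by
    intro x y
    show deriv (fun s => f (0, x, s)) y = deriv (fun s => f (0, 0, s)) y
    have he : (fun s => f (0, x, s)) = fun s => f (0, 0, s) + pdx f 0 0 0 * x :=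
      funext fun s => hflin x s
    rw [he, deriv_add_const]
  have hpdyy : ∀ x y : ℝ, pdyy f 0 x y = pdyy f 0 0 y := by
    intro x y
    show deriv (fun s => pdy f 0 x s) y = deriv (fun s => pdy f 0 0 s) y
    rw [show (fun s => pdy f 0 x s) = fun s => pdy f 0 0 s from funext fun s => hpdy x s]
  -- Final contradiction from the last equation at x = 1 and x = -1
  have e1 := (H 0 1 0).2.2.2.2.2
  have e2 := (H 0 (-1) 0).2.2.2.2.2
  rw [hpdt0 0 1 0, hpdxk 1 0, hpdyy 1 0, hlam] at e1
  rw [hpdt0 0 (-1) 0, hpdxk (-1) 0, hpdyy (-1) 0, hlam] at e2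
  have : (2 : ℝ) / 3 = 0 := by linear_combination e2 - e1
  norm_num at this
end

section
/- Let f : ℝ³ → ℝ and a : ℝ → ℝ be smooth and let λ ∈ ℝ satisfy the first five equations of system (W) at every point of ℝ³, i.e. f_tt = 0, f_tx = 0, f_ty = λ, f_xx = λ, and f_xy − (1/2)(3x² + a(y)) f_t = 0. Then the partial derivative ∂f/∂t vanishes identically on ℝ³, λ = 0, and the mixed derivative f_xy vanishes identically on ℝ³. -/
/-- If the first five equations of system (W) hold everywhere, then `f_t ≡ 0`,
`lam = 0` and `f_xy ≡ 0`. -/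
theorem walker_first_five_eqns_force_steady
    (f : ℝ × ℝ × ℝ → ℝ) (a : ℝ → ℝ) (lam : ℝ)
    (hf : ContDiff ℝ (⊤ : ℕ∞) f) (ha : ContDiff ℝ (⊤ : ℕ∞) a)
    (h1 : ∀ t x y : ℝ, pdtt f t x y = 0)
    (h2 : ∀ t x y : ℝ, pdtx f t x y = 0)
    (h3 : ∀ t x y : ℝ, pdty f t x y = lam)
    (h4 : ∀ t x y : ℝ, pdxx f t x y = lam)
    (h5 : ∀ t x y : ℝ,
      pdxy f t x y - (1/2) * (3 * x^2 + a y) * pdt f t x y = 0) :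
    (∀ t x y : ℝ, pdt f t x y = 0) ∧ lam = 0 ∧
      (∀ t x y : ℝ, pdxy f t x y = 0) := by
  set F : ℝ × ℝ × ℝ → ℝ := fun p => fderiv ℝ f p (1, 0, 0) with hFdef
  set G : ℝ × ℝ × ℝ → ℝ := fun p => fderiv ℝ f p (0, 1, 0) with hGdef
  have hFsm : ContDiff ℝ (⊤ : ℕ∞) F := (hf.fderiv_right (by simp)).clm_apply contDiff_const
  have hGsm : ContDiff ℝ (⊤ : ℕ∞) G := (hf.fderiv_right (by simp)).clm_apply contDiff_const
  have hpdt : ∀ t x y : ℝ, pdt f t x y = F (t, x, y) := by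
    intro t x y
    have hc : HasDerivAt (fun s : ℝ => (s, x, y)) ((1 : ℝ), (0 : ℝ), (0 : ℝ)) t :=
      HasDerivAt.prodMk (hasDerivAt_id t) (HasDerivAt.prodMk (hasDerivAt_const t x) (hasDerivAt_const t y))
    exact (((hf.differentiable (by simp) (t, x, y)).hasFDerivAt).comp_hasDerivAt t hc).deriv
  have hpdx : ∀ t x y : ℝ, pdx f t x y = G (t, x, y) := by
    intro t x y
    have hc : HasDerivAt (fun s : ℝ => (t, s, y)) ((0 : ℝ), (1 : ℝ), (0 : ℝ)) x :=
      HasDerivAt.prodMk (hasDerivAt_const x t) (HasDerivAt.prodMk (hasDerivAt_id x) (hasDerivAt_const x y))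
    exact (((hf.differentiable (by simp) (t, x, y)).hasFDerivAt).comp_hasDerivAt x hc).deriv
  have hcurve : ∀ t y : ℝ, Differentiable ℝ (fun s : ℝ => ((t, s, y) : ℝ × ℝ × ℝ)) := by
    intro t y
    exact Differentiable.prodMk (differentiable_const t) (Differentiable.prodMk (differentiable_id) (differentiable_const y))
  -- pdt is constant in x
  have hconstx : ∀ t x y : ℝ, pdt f t x y = pdt f t 0 y := by
    intro t x y
    have hdiff : Differentiable ℝ (fun s : ℝ => F (t, s, y)) :=
      (hFsm.differentiable (by simp)).comp (hcurve t y)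
    have hderiv : ∀ u : ℝ, deriv (fun s : ℝ => F (t, s, y)) u = 0 := by
      intro u
      have h := h2 t u y
      rw [pdtx, show (fun s => pdt f t s y) = fun s => F (t, s, y) from
        funext fun s => hpdt t s y] at h
      exact h
    have := is_const_of_deriv_eq_zero hdiff hderiv x 0
    rw [hpdt t x y, hpdt t 0 y]
    exact this
  -- pdx is affine in x with slope lam
  have haff : ∀ t x y : ℝ, pdx f t x y = lam * x + pdx f t 0 y := by
    intro t x y
    have hdiffG : Differentiable ℝ (fun s : ℝ => G (t, s, y)) :=
      (hGsm.differentiable (by simp)).comp (hcurve t y)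
    have hmul : Differentiable ℝ (fun s : ℝ => lam * s) := by fun_prop
    have hdiff : Differentiable ℝ (fun s : ℝ => G (t, s, y) - lam * s) :=
      hdiffG.sub hmul
    have hderiv : ∀ u : ℝ, deriv (fun s : ℝ => G (t, s, y) - lam * s) u = 0 := by
      intro u
      rw [deriv_fun_sub (hdiffG u) (hmul u)]
      have h := h4 t u y
      rw [pdxx, show (fun s => pdx f t s y) = fun s => G (t, s, y) from
        funext fun s => hpdx t s y] at h
      rw [h]
      have hd : deriv (fun s : ℝ => lam * s) u = lam := by
        simpa using ((hasDerivAt_id u).const_mul lam).deriv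
      rw [hd]
      ring
    have := is_const_of_deriv_eq_zero hdiff hderiv x 0
    simp only [mul_zero, sub_zero] at this
    rw [hpdx t x y, hpdx t 0 y]
    linarith [this]
  -- hence pdxy is independent of x
  have hxy : ∀ t x y : ℝ, pdxy f t x y = pdxy f t 0 y := by
    intro t x y
    rw [pdxy, pdxy, show (fun s => pdx f t x s) = fun s => lam * x + pdx f t 0 s from
      funext fun s => haff t x s, deriv_const_add]
  -- h5 at x = 1 and x = 0 forces pdt = 0
  have hc0 : ∀ t y : ℝ, pdt f t 0 y = 0 := by
    intro t y
    have e1 := h5 t 1 y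
    have e0 := h5 t 0 y
    rw [hxy t 1 y, hconstx t 1 y] at e1
    nlinarith [e1, e0]
  have pdt0 : ∀ t x y : ℝ, pdt f t x y = 0 := fun t x y =>
    (hconstx t x y).trans (hc0 t y)
  refine ⟨pdt0, ?_, ?_⟩
  · have h := h3 0 0 0
    rw [pdty, show (fun s => pdt f 0 0 s) = fun _ : ℝ => (0 : ℝ) from
      funext fun s => pdt0 0 0 s] at h
    simpa using h.symm
  · intro t x y
    have h := h5 t x y
    rw [pdt0 t x y] at h
    linarith
end

section
/- Let f : ℝ³ → ℝ and φ : ℝ → ℝ be smooth and λ ∈ ℝ, and suppose the system (E) holds at every point of ℝ³. Then φ''(x)·f_t(t,x,y) = 0 for every (t,x,y) ∈ ℝ³, where f_t denotes the partial derivative of f with respect to t. -/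
/-- The `x`-slice derivative of a smooth function equals the full derivative
applied to `(0,1,0)`. -/
lemma pd_line_x (g : ℝ × ℝ × ℝ → ℝ) (hg : ContDiff ℝ (⊤ : ℕ∞) g) (t x y : ℝ) :
    deriv (fun s => g (t, s, y)) x = fderiv ℝ g (t, x, y) (0, 1, 0) := by
  have hc : HasDerivAt (fun s : ℝ => ((t, s, y) : ℝ × ℝ × ℝ)) (0, 1, 0) x :=
    (hasDerivAt_const x t).prodMk ((hasDerivAt_id x).prodMk (hasDerivAt_const x y))
  exact (((hg.differentiable (by simp) (t, x, y)).hasFDerivAt).comp_hasDerivAt x hc).deriv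

lemma pd_line_t (g : ℝ × ℝ × ℝ → ℝ) (hg : ContDiff ℝ (⊤ : ℕ∞) g) (t x y : ℝ) :
    deriv (fun s => g (s, x, y)) t = fderiv ℝ g (t, x, y) (1, 0, 0) := by
  have hc : HasDerivAt (fun s : ℝ => ((s, x, y) : ℝ × ℝ × ℝ)) (1, 0, 0) t :=
    (hasDerivAt_id t).prodMk ((hasDerivAt_const t x).prodMk (hasDerivAt_const t y))
  exact (((hg.differentiable (by simp) (t, x, y)).hasFDerivAt).comp_hasDerivAt t hc).deriv

lemma pd_line_y (g : ℝ × ℝ × ℝ → ℝ) (hg : ContDiff ℝ (⊤ : ℕ∞) g) (t x y : ℝ) :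
    deriv (fun s => g (t, x, s)) y = fderiv ℝ g (t, x, y) (0, 0, 1) := by
  have hc : HasDerivAt (fun s : ℝ => ((t, x, s) : ℝ × ℝ × ℝ)) (0, 0, 1) y :=
    (hasDerivAt_const y t).prodMk ((hasDerivAt_const y x).prodMk (hasDerivAt_id y))
  exact (((hg.differentiable (by simp) (t, x, y)).hasFDerivAt).comp_hasDerivAt y hc).deriv

lemma fderiv_apply_const (g : ℝ × ℝ × ℝ → ℝ) (hg : ContDiff ℝ (⊤ : ℕ∞) g)
    (v q w : ℝ × ℝ × ℝ) :
    fderiv ℝ (fun p => fderiv ℝ g p v) q w = fderiv ℝ (fderiv ℝ g) q w v := by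
  rw [fderiv_clm_apply (((hg.fderiv_right (m := (⊤ : ℕ∞)) (by simp)).differentiable (by simp)) q)
      (differentiableAt_const v)]
  simp

/-- If the soliton system (E) on a 3-dimensional Walker manifold with metric
function `φ = φ(x)` holds everywhere, then `φ''(x)·f_t(t,x,y) = 0` at every
point. -/
theorem walker_dichotomy
    (f : ℝ × ℝ × ℝ → ℝ) (φ : ℝ → ℝ) (lam : ℝ)
    (hf : ContDiff ℝ (⊤ : ℕ∞) f) (hφ : ContDiff ℝ (⊤ : ℕ∞) φ)
    (h1 : ∀ t x y : ℝ, pdtt f t x y = 0)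
    (h2 : ∀ t x y : ℝ, pdtx f t x y = 0)
    (h3 : ∀ t x y : ℝ, pdty f t x y = lam)
    (h4 : ∀ t x y : ℝ, pdxx f t x y = lam)
    (h5 : ∀ t x y : ℝ,
      pdxy f t x y - (1/2) * deriv φ x * pdt f t x y = 0)
    (h6 : ∀ t x y : ℝ,
      -(1/2) * deriv (deriv φ) x + pdyy f t x y
          + (1/2) * deriv φ x * pdx f t x y = lam * φ x) :
    ∀ t x y : ℝ, deriv (deriv φ) x * pdt f t x y = 0 := by
  intro t x y
  -- G is the x-partial derivative of f, as a smooth function on ℝ³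
  set G : ℝ × ℝ × ℝ → ℝ := fun p => fderiv ℝ f p (0, 1, 0) with hGdef
  have hG : ContDiff ℝ (⊤ : ℕ∞) G := (hf.fderiv_right (by simp)).clm_apply contDiff_const
  have hGy : ContDiff ℝ (⊤ : ℕ∞) (fun p => fderiv ℝ G p (0, 0, 1)) :=
    (hG.fderiv_right (by simp)).clm_apply contDiff_const
  have hGx : ContDiff ℝ (⊤ : ℕ∞) (fun p => fderiv ℝ G p (0, 1, 0)) :=
    (hG.fderiv_right (by simp)).clm_apply contDiff_const
  have hpdx : ∀ a b c : ℝ, pdx f a b c = G (a, b, c) := fun a b c =>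
    pd_line_x f hf a b c
  -- pdxy expressed through G
  have hpdxy : ∀ s : ℝ, pdxy f t s y = fderiv ℝ G (t, s, y) (0, 0, 1) := by
    intro s
    unfold pdxy
    have : (fun u => pdx f t s u) = fun u => G (t, s, u) := funext fun u => hpdx t s u
    rw [this, pd_line_y G hG t s y]
  -- the x-derivative of pdxy vanishes (Clairaut + h4)
  have key : deriv (fun s => pdxy f t s y) x = 0 := by
    have e : (fun s => pdxy f t s y)
        = fun s => (fun p => fderiv ℝ G p (0, 0, 1)) (t, s, y) :=
      funext fun s => hpdxy s
    rw [e, pd_line_x _ hGy t x y,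
        fderiv_apply_const G hG (0, 0, 1) (t, x, y) (0, 1, 0)]
    have hsymm : IsSymmSndFDerivAt ℝ G (t, x, y) :=
      (hG.contDiffAt.of_le (m := 2) (WithTop.coe_le_coe.mpr le_top)).isSymmSndFDerivAt (by simp [minSmoothness_of_isRCLikeNormedField])
    rw [hsymm (0, 1, 0) (0, 0, 1),
        ← fderiv_apply_const G hG (0, 1, 0) (t, x, y) (0, 0, 1),
        ← pd_line_y _ hGx t x y]
    have e2 : (fun s => (fun p => fderiv ℝ G p (0, 1, 0)) (t, x, s))
        = fun s => pdxx f t x s := by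
      funext s
      unfold pdxx
      have : (fun u => pdx f t u s) = fun u => G (t, u, s) := funext fun u => hpdx t u s
      rw [this, pd_line_x G hG t x s]
    rw [e2]
    simp only [h4]
    exact deriv_const y lam
  -- pdt as a smooth function of x
  have hT : ContDiff ℝ (⊤ : ℕ∞) (fun p : ℝ × ℝ × ℝ => fderiv ℝ f p (1, 0, 0)) :=
    (hf.fderiv_right (by simp)).clm_apply contDiff_const
  have hBfun : (fun s => pdt f t s y)
      = fun s => (fun p : ℝ × ℝ × ℝ => fderiv ℝ f p (1, 0, 0)) (t, s, y) :=
    funext fun s => pd_line_t f hf t s y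
  have hBdiff : DifferentiableAt ℝ (fun s => pdt f t s y) x := by
    rw [hBfun]
    exact ((hT.comp (contDiff_const.prodMk (contDiff_id.prodMk contDiff_const))).differentiable
      (by simp) x)
  have hderivB : deriv (fun s => pdt f t s y) x = 0 := h2 t x y
  -- rewrite pdxy via h5
  have hA : (fun s => pdxy f t s y) = fun s => (1/2) * deriv φ s * pdt f t s y :=
    funext fun s => by have := h5 t s y; linarith
  rw [hA] at key
  have hφd : ContDiff ℝ (⊤ : ℕ∞) (deriv φ) := (contDiff_infty_iff_deriv.mp (hφ.of_le (by simp))).2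
  have hφdiff : DifferentiableAt ℝ (fun s => (1/2 : ℝ) * deriv φ s) x :=
    (differentiableAt_const _).mul (hφd.differentiable (by simp) x)
  rw [deriv_fun_mul hφdiff hBdiff, hderivB] at key
  have hc : deriv (fun s => (1/2 : ℝ) * deriv φ s) x = (1/2) * deriv (deriv φ) x := by
    rw [deriv_const_mul _ (hφd.differentiable (by simp) x)]
  rw [hc] at key
  linarith
end

section
/- Let f : ℝ³ → ℝ and φ : ℝ → ℝ be smooth and λ ∈ ℝ, and suppose the system (E) holds at every point of ℝ³. If there exists a point x₀ ∈ ℝ with φ''(x₀) ≠ 0, then λ = 0 (the soliton is steady) and the partial derivative f_t vanishes identically on ℝ³. -/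
open scoped ContDiff

noncomputable def dd (v : ℝ × ℝ × ℝ) (g : ℝ × ℝ × ℝ → ℝ) : ℝ × ℝ × ℝ → ℝ :=
  fun p => fderiv ℝ g p v

lemma dd_contDiff {g : ℝ × ℝ × ℝ → ℝ} (hg : ContDiff ℝ (∞ : WithTop ℕ∞) g) (v : ℝ × ℝ × ℝ) :
    ContDiff ℝ (∞ : WithTop ℕ∞) (dd v g) :=
  (hg.fderiv_right (m := ∞) (by norm_num)).clm_apply contDiff_const

lemma fderiv_dd {g : ℝ × ℝ × ℝ → ℝ} (hg : ContDiff ℝ (∞ : WithTop ℕ∞) g)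
    (p v w : ℝ × ℝ × ℝ) :
    fderiv ℝ (dd w g) p v = fderiv ℝ (fderiv ℝ g) p v w := by
  have h1 : DifferentiableAt ℝ (fderiv ℝ g) p :=
    ((hg.fderiv_right (m := ∞) (by norm_num)).differentiable (by norm_num)) p
  have h2 := fderiv_clm_apply h1 (differentiableAt_const w)
  have : fderiv ℝ (dd w g) p = (fderiv ℝ g p).comp (fderiv ℝ (fun _ : ℝ × ℝ × ℝ => w) p)
      + (fderiv ℝ (fderiv ℝ g) p).flip w := h2
  rw [this]
  simp

lemma dd_symm {g : ℝ × ℝ × ℝ → ℝ} (hg : ContDiff ℝ (∞ : WithTop ℕ∞) g)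
    (v w : ℝ × ℝ × ℝ) (p : ℝ × ℝ × ℝ) :
    dd v (dd w g) p = dd w (dd v g) p := by
  have h1 : ∀ q, HasFDerivAt g (fderiv ℝ g q) q :=
    fun q => ((hg.differentiable (by norm_num)) q).hasFDerivAt
  have h2 : HasFDerivAt (fderiv ℝ g) (fderiv ℝ (fderiv ℝ g) p) p :=
    (((hg.fderiv_right (m := ∞) (by norm_num)).differentiable (by norm_num)) p).hasFDerivAt
  show fderiv ℝ (dd w g) p v = fderiv ℝ (dd v g) p w
  rw [fderiv_dd hg, fderiv_dd hg]
  exact second_derivative_symmetric h1 h2 v w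

lemma hasDerivAt_line1 {g : ℝ × ℝ × ℝ → ℝ} (hg : Differentiable ℝ g) (t x y : ℝ) :
    HasDerivAt (fun s => g (s, x, y)) (dd (1,0,0) g (t,x,y)) t := by
  have hline : HasDerivAt (fun s : ℝ => (s, x, y)) ((1:ℝ), (0:ℝ), (0:ℝ)) t :=
    HasDerivAt.prodMk (hasDerivAt_id t) (HasDerivAt.prodMk (hasDerivAt_const t x) (hasDerivAt_const t y))
  exact (hg (t,x,y)).hasFDerivAt.comp_hasDerivAt t hline

lemma hasDerivAt_line2 {g : ℝ × ℝ × ℝ → ℝ} (hg : Differentiable ℝ g) (t x y : ℝ) :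
    HasDerivAt (fun s => g (t, s, y)) (dd (0,1,0) g (t,x,y)) x := by
  have hline : HasDerivAt (fun s : ℝ => (t, s, y)) ((0:ℝ), (1:ℝ), (0:ℝ)) x :=
    HasDerivAt.prodMk (hasDerivAt_const x t) (HasDerivAt.prodMk (hasDerivAt_id x) (hasDerivAt_const x y))
  exact (hg (t,x,y)).hasFDerivAt.comp_hasDerivAt x hline

lemma hasDerivAt_line3 {g : ℝ × ℝ × ℝ → ℝ} (hg : Differentiable ℝ g) (t x y : ℝ) :
    HasDerivAt (fun s => g (t, x, s)) (dd (0,0,1) g (t,x,y)) y := by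
  have hline : HasDerivAt (fun s : ℝ => (t, x, s)) ((0:ℝ), (0:ℝ), (1:ℝ)) y :=
    HasDerivAt.prodMk (hasDerivAt_const y t) (HasDerivAt.prodMk (hasDerivAt_const y x) (hasDerivAt_id y))
  exact (hg (t,x,y)).hasFDerivAt.comp_hasDerivAt y hline



/-- If the soliton system (E) holds everywhere and `φ''(x₀) ≠ 0` for some
`x₀`, then the soliton is steady (`lam = 0`) and `f_t ≡ 0`. -/
theorem walker_nonaffine_phi_forces_steady
    (f : ℝ × ℝ × ℝ → ℝ) (φ : ℝ → ℝ) (lam : ℝ)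
    (hf : ContDiff ℝ (⊤ : ℕ∞) f) (hφ : ContDiff ℝ (⊤ : ℕ∞) φ)
    (h1 : ∀ t x y : ℝ, pdtt f t x y = 0)
    (h2 : ∀ t x y : ℝ, pdtx f t x y = 0)
    (h3 : ∀ t x y : ℝ, pdty f t x y = lam)
    (h4 : ∀ t x y : ℝ, pdxx f t x y = lam)
    (h5 : ∀ t x y : ℝ,
      pdxy f t x y - (1/2) * deriv φ x * pdt f t x y = 0)
    (h6 : ∀ t x y : ℝ,
      -(1/2) * deriv (deriv φ) x + pdyy f t x y
          + (1/2) * deriv φ x * pdx f t x y = lam * φ x)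
    (x₀ : ℝ) (hx₀ : deriv (deriv φ) x₀ ≠ 0) :
    lam = 0 ∧ ∀ t x y : ℝ, pdt f t x y = 0 := by
  have hf' : ContDiff ℝ (∞ : WithTop ℕ∞) f := hf.of_le (by simp)
  have hφ' : ContDiff ℝ (∞ : WithTop ℕ∞) φ := hφ.of_le (by simp)
  have hφ1 : ContDiff ℝ (∞ : WithTop ℕ∞) (deriv φ) := (contDiff_infty_iff_deriv.mp hφ').2
  have hφ2 : ContDiff ℝ (∞ : WithTop ℕ∞) (deriv (deriv φ)) := (contDiff_infty_iff_deriv.mp hφ1).2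
  set u : ℝ × ℝ × ℝ → ℝ := dd (1,0,0) f with hu_def
  set w : ℝ × ℝ × ℝ → ℝ := dd (0,1,0) f with hw_def
  set fy : ℝ × ℝ × ℝ → ℝ := dd (0,0,1) f with hfy_def
  have hu : ContDiff ℝ (∞ : WithTop ℕ∞) u := dd_contDiff hf' _
  have hw : ContDiff ℝ (∞ : WithTop ℕ∞) w := dd_contDiff hf' _
  have hfy : ContDiff ℝ (∞ : WithTop ℕ∞) fy := dd_contDiff hf' _
  have hfd : Differentiable ℝ f := hf'.differentiable (by norm_num)
  have hud : Differentiable ℝ u := hu.differentiable (by norm_num)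
  have hwd : Differentiable ℝ w := hw.differentiable (by norm_num)
  have hfyd : Differentiable ℝ fy := hfy.differentiable (by norm_num)
  -- translation of first partials
  have pdtE : ∀ t x y, pdt f t x y = u (t,x,y) := fun t x y => (hasDerivAt_line1 hfd t x y).deriv
  have pdxE : ∀ t x y, pdx f t x y = w (t,x,y) := fun t x y => (hasDerivAt_line2 hfd t x y).deriv
  have pdyE : ∀ t x y, pdy f t x y = fy (t,x,y) := fun t x y => (hasDerivAt_line3 hfd t x y).deriv
  -- translated hypotheses
  have Hu1 : ∀ t x y : ℝ, dd (1,0,0) u (t,x,y) = 0 := by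
    intro t x y
    have e : (fun s => pdt f s x y) = fun s => u (s,x,y) := funext fun s => pdtE s x y
    have h := h1 t x y
    rwa [pdtt, e, (hasDerivAt_line1 hud t x y).deriv] at h
  have Hu2 : ∀ t x y : ℝ, dd (0,1,0) u (t,x,y) = 0 := by
    intro t x y
    have e : (fun s => pdt f t s y) = fun s => u (t,s,y) := funext fun s => pdtE t s y
    have h := h2 t x y
    rwa [pdtx, e, (hasDerivAt_line2 hud t x y).deriv] at h
  have Hu3 : ∀ t x y : ℝ, dd (0,0,1) u (t,x,y) = lam := by
    intro t x y
    have e : (fun s => pdt f t x s) = fun s => u (t,x,s) := funext fun s => pdtE t x s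
    have h := h3 t x y
    rwa [pdty, e, (hasDerivAt_line3 hud t x y).deriv] at h
  have Hw2 : ∀ t x y : ℝ, dd (0,1,0) w (t,x,y) = lam := by
    intro t x y
    have e : (fun s => pdx f t s y) = fun s => w (t,s,y) := funext fun s => pdxE t s y
    have h := h4 t x y
    rwa [pdxx, e, (hasDerivAt_line2 hwd t x y).deriv] at h
  have Hw3 : ∀ t x y : ℝ, dd (0,0,1) w (t,x,y) = 1/2 * deriv φ x * u (t,x,y) := by
    intro t x y
    have e : (fun s => pdx f t x s) = fun s => w (t,x,s) := funext fun s => pdxE t x s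
    have h := h5 t x y
    rw [pdxy, e, (hasDerivAt_line3 hwd t x y).deriv, pdtE t x y] at h
    linarith
  have HG : ∀ t x y : ℝ, dd (0,0,1) fy (t,x,y)
      = lam * φ x + 1/2 * deriv (deriv φ) x - 1/2 * deriv φ x * w (t,x,y) := by
    intro t x y
    have e : (fun s => pdy f t x s) = fun s => fy (t,x,s) := funext fun s => pdyE t x s
    have h := h6 t x y
    rw [pdyy, e, (hasDerivAt_line3 hfyd t x y).deriv, pdxE t x y] at h
    linarith
  -- Step A : u (t,x,y) = u (0,0,0) + lam * y
  have hAt : ∀ t x y : ℝ, u (t,x,y) = u (0,x,y) := fun t x y =>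
    is_const_of_deriv_eq_zero (fun s => (hasDerivAt_line1 hud s x y).differentiableAt)
      (fun s => by rw [(hasDerivAt_line1 hud s x y).deriv]; exact Hu1 s x y) t 0
  have hAx : ∀ t x y : ℝ, u (t,x,y) = u (t,0,y) := fun t x y =>
    is_const_of_deriv_eq_zero (fun s => (hasDerivAt_line2 hud t s y).differentiableAt)
      (fun s => by rw [(hasDerivAt_line2 hud t s y).deriv]; exact Hu2 t s y) x 0
  have hAy : ∀ t x y : ℝ, u (t,x,y) = u (t,x,0) + lam * y := by
    intro t x y
    have key := is_const_of_deriv_eq_zero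
      (f := fun s => u (t,x,s) - lam * s)
      (fun s => ((hasDerivAt_line3 hud t x s).sub ((hasDerivAt_id' (x := s)).const_mul lam)).differentiableAt)
      (fun s => by
        rw [show deriv (fun s => u (t,x,s) - lam * s) s = _ from ((hasDerivAt_line3 hud t x s).sub ((hasDerivAt_id' (x := s)).const_mul lam)).deriv, Hu3]
        ring) y 0
    simp only [mul_zero, sub_zero] at key
    linarith
  have hA : ∀ t x y : ℝ, u (t,x,y) = u (0,0,0) + lam * y := by
    intro t x y
    rw [hAy t x y, hAt t x 0, hAx 0 x 0]
  -- Step B : φ'' x * w p = φ''' x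
  have hB : ∀ t x y : ℝ, deriv (deriv φ) x * w (t,x,y) = deriv (deriv (deriv φ)) x := by
    intro t x y
    have hsym1 : dd (0,1,0) fy = dd (0,0,1) w := funext fun p => dd_symm hf' _ _ p
    have hG : ContDiff ℝ (∞ : WithTop ℕ∞) (dd (0,0,1) fy) := dd_contDiff hfy _
    -- way 1
    have hdw3 : ContDiff ℝ (∞ : WithTop ℕ∞) (dd (0,0,1) w) := dd_contDiff hw _
    have way1 : dd (0,1,0) (dd (0,0,1) fy) (t,x,y) = 1/2 * deriv φ x * lam := by
      have s1 : dd (0,1,0) (dd (0,0,1) fy) (t,x,y) = dd (0,0,1) (dd (0,1,0) fy) (t,x,y) :=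
        dd_symm hfy _ _ _
      rw [s1, hsym1]
      have e : (fun s => dd (0,0,1) w (t,x,s)) = fun s => 1/2 * deriv φ x * u (t,x,s) :=
        funext fun s => Hw3 t x s
      have hder : HasDerivAt (fun s => 1/2 * deriv φ x * u (t,x,s)) (1/2 * deriv φ x * lam) y := by
        have h := (hasDerivAt_line3 hud t x y).const_mul (1/2 * deriv φ x)
        rwa [Hu3] at h
      rw [← (hasDerivAt_line3 (hdw3.differentiable (by norm_num)) t x y).deriv, e, hder.deriv]
    -- way 2
    have d1 : HasDerivAt φ (deriv φ x) x := (hφ'.differentiable (by norm_num) x).hasDerivAt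
    have d1' : HasDerivAt (deriv φ) (deriv (deriv φ) x) x :=
      (hφ1.differentiable (by norm_num) x).hasDerivAt
    have d2 : HasDerivAt (deriv (deriv φ)) (deriv (deriv (deriv φ)) x) x :=
      (hφ2.differentiable (by norm_num) x).hasDerivAt
    have dw : HasDerivAt (fun s => w (t,s,y)) lam x := by
      have h := hasDerivAt_line2 hwd t x y
      rwa [Hw2] at h
    have hder2 : HasDerivAt
        (fun s => lam * φ s + 1/2 * deriv (deriv φ) s - 1/2 * deriv φ s * w (t,s,y))
        (lam * deriv φ x + 1/2 * deriv (deriv (deriv φ)) x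
          - (1/2 * deriv (deriv φ) x * w (t,x,y) + 1/2 * deriv φ x * lam)) x :=
      ((d1.const_mul lam).add (d2.const_mul (1/2))).sub ((d1'.const_mul (1/2)).mul dw)
    have e2' : (fun s => dd (0,0,1) fy (t,s,y))
        = fun s => lam * φ s + 1/2 * deriv (deriv φ) s - 1/2 * deriv φ s * w (t,s,y) :=
      funext fun s => HG t s y
    have way2 : dd (0,1,0) (dd (0,0,1) fy) (t,x,y)
        = lam * deriv φ x + 1/2 * deriv (deriv (deriv φ)) x
          - (1/2 * deriv (deriv φ) x * w (t,x,y) + 1/2 * deriv φ x * lam) := by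
      rw [← (hasDerivAt_line2 (hG.differentiable (by norm_num)) t x y).deriv, e2', hder2.deriv]
    have keyeq := way1.symm.trans way2
    linear_combination (2 : ℝ) * keyeq
  -- Step C : φ'' x * φ' x * u p = 0 (times 1/2)
  have hC : ∀ t x y : ℝ, deriv (deriv φ) x * (1/2 * deriv φ x * u (t,x,y)) = 0 := by
    intro t x y
    have hd : HasDerivAt (fun s => deriv (deriv φ) x * w (t,x,s))
        (deriv (deriv φ) x * dd (0,0,1) w (t,x,y)) y :=
      (hasDerivAt_line3 hwd t x y).const_mul (deriv (deriv φ) x)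
    have e : (fun s => deriv (deriv φ) x * w (t,x,s)) = fun _ => deriv (deriv (deriv φ)) x :=
      funext fun s => hB t x s
    have h0 : deriv (deriv φ) x * dd (0,0,1) w (t,x,y) = 0 := by
      rw [← hd.deriv, e]; simp
    rwa [Hw3] at h0
  -- Step D
  have hzero : ∀ y : ℝ, u (0,0,0) + lam * y = 0 := by
    by_contra hcon
    push_neg at hcon
    obtain ⟨y₀, hy₀⟩ := hcon
    have hall : ∀ x : ℝ, deriv (deriv φ) x * deriv φ x = 0 := by
      intro x
      have h := hC 0 x y₀
      rw [hA 0 x y₀] at h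
      rcases mul_eq_zero.mp h with h' | h'
      · rw [h']; ring
      · rcases mul_eq_zero.mp h' with h'' | h''
        · rcases mul_eq_zero.mp h'' with h3 | h3
          · norm_num at h3
          · rw [h3]; ring
        · exact absurd h'' hy₀
    have hev : ∀ᶠ x in nhds x₀, deriv (deriv φ) x ≠ 0 :=
      (hφ2.continuous.continuousAt).eventually_ne hx₀
    have heq : deriv φ =ᶠ[nhds x₀] fun _ => (0 : ℝ) := by
      filter_upwards [hev] with x hx
      rcases mul_eq_zero.mp (hall x) with h | h
      · exact absurd h hx
      · exact h
    have : deriv (deriv φ) x₀ = 0 := by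
      rw [Filter.EventuallyEq.deriv_eq heq]; simp
    exact hx₀ this
  have hlam : lam = 0 := by
    have h0 := hzero 0
    have h1' := hzero 1
    linarith
  refine ⟨hlam, fun t x y => ?_⟩
  rw [pdtE t x y, hA t x y]
  have := hzero y
  linarith
end

section
/- (Existence of gradient ρ-Einstein solitons on Walker manifolds with exponential metric function, Case II of the paper's classification.) Let m, k, l, s, p, r ∈ ℝ with m ≠ 0, and set n = −(l·m)/2. Define φ : ℝ → ℝ by φ(x) = (k/m²)·e^{m x} + l x + s and f : ℝ³ → ℝ by f(t,x,y) = m x + (n/2)·y² + p y + r. Then the pair (f, φ) together with λ = 0 satisfies the system (E) at every point of ℝ³; i.e., the 3-dimensional Walker manifold with metric 2 dt dy + dx² + φ(x) dy² is a steady gradient ρ-Einstein soliton with potential function f. -/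
/-!
The potential does not depend on `t` and splits as `f = u(x) + v(y)`, so every derivative
involving `t` and the mixed derivative `f_xy` vanish, and (E) reduces to `u'' = 0` and
`-φ''/2 + v'' + φ' u'/2 = 0`. With `u' = m`, `v'' = n` and `c = k/m²`, the exponential terms
`-c m² e^{mx}/2` and `c m e^{mx} · m/2` cancel, leaving `n + lm/2 = 0`.
-/

open Real

def sepXY (u v : ℝ → ℝ) (q : ℝ × ℝ × ℝ) : ℝ := u q.2.1 + v q.2.2

section SepXY

variable (u v : ℝ → ℝ) (t x y : ℝ)

theorem pdt_sepXY : pdt (sepXY u v) t x y = 0 :=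
  deriv_const t (u x + v y)

theorem pdx_sepXY : pdx (sepXY u v) t x y = deriv u x :=
  deriv_add_const (v y)

theorem pdy_sepXY : pdy (sepXY u v) t x y = deriv v y := by
  simp only [pdy, sepXY, deriv_const_add']

theorem pdtt_sepXY : pdtt (sepXY u v) t x y = 0 := by
  simp only [pdtt, pdt_sepXY, deriv_const']

theorem pdtx_sepXY : pdtx (sepXY u v) t x y = 0 := by
  simp only [pdtx, pdt_sepXY, deriv_const']

theorem pdty_sepXY : pdty (sepXY u v) t x y = 0 := by
  simp only [pdty, pdt_sepXY, deriv_const']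

theorem pdxx_sepXY : pdxx (sepXY u v) t x y = deriv (deriv u) x := by
  simp only [pdxx, pdx_sepXY]

theorem pdxy_sepXY : pdxy (sepXY u v) t x y = 0 := by
  simp only [pdxy, pdx_sepXY, deriv_const']

theorem pdyy_sepXY : pdyy (sepXY u v) t x y = deriv (deriv v) y := by
  simp only [pdyy, pdy_sepXY]

end SepXY

theorem hasDerivAt_const_mul_exp_mul (c m x : ℝ) :
    HasDerivAt (fun x => c * exp (m * x)) (c * m * exp (m * x)) x :=
  ((((hasDerivAt_id' x).const_mul m).exp).const_mul c).congr_deriv (by ring)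

theorem deriv_const_mul_exp_mul_add (c m l : ℝ) :
    deriv (fun x => c * exp (m * x) + l) = fun x => c * m * exp (m * x) := by
  funext x; exact ((hasDerivAt_const_mul_exp_mul c m x).add_const l).deriv

theorem deriv_const_mul_exp_mul_add_mul_add (c m l s : ℝ) :
    deriv (fun x => c * exp (m * x) + l * x + s) = fun x => c * m * exp (m * x) + l := by
  funext x
  exact (((hasDerivAt_const_mul_exp_mul c m x).add ((hasDerivAt_id' x).const_mul l)).add_const
    s).deriv.trans (by ring)

theorem deriv_quadratic (a b c : ℝ) :
    deriv (fun y => a * y ^ 2 + b * y + c) = fun y => 2 * a * y + b := by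
  funext y
  exact ((((hasDerivAt_pow 2 y).const_mul a).add ((hasDerivAt_id' y).const_mul b)).add_const
    c).deriv.trans (by ring)

theorem walker_soliton_case_II_general
    (m k l s p r : ℝ) (n : ℝ) (hn : n = -(l * m) / 2)
    (φ : ℝ → ℝ) (hφ : φ = fun x => (k / m^2) * Real.exp (m * x) + l * x + s)
    (f : ℝ × ℝ × ℝ → ℝ)
    (hf : f = fun q => m * q.2.1 + (n/2) * q.2.2^2 + p * q.2.2 + r) :
    ∀ t x y : ℝ,
      pdtt f t x y = 0 ∧
      pdtx f t x y = 0 ∧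
      pdty f t x y = 0 ∧
      pdxx f t x y = 0 ∧
      pdxy f t x y - (1/2) * deriv φ x * pdt f t x y = 0 ∧
      -(1/2) * deriv (deriv φ) x + pdyy f t x y
          + (1/2) * deriv φ x * pdx f t x y = 0 * φ x := by
  have hf_sep : f = sepXY (fun x => m * x) (fun y => n / 2 * y ^ 2 + p * y + r) := by
    subst hf; funext q; simp only [sepXY]; ring
  have hu' : deriv (fun x => m * x) = fun _ => m := deriv_const_mul_id' m
  have hv'' : deriv (deriv fun y => n / 2 * y ^ 2 + p * y + r) = fun _ => n := by
    rw [deriv_quadratic]; funext y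
    rw [deriv_add_const', deriv_const_mul_id']; ring
  have hφ' : deriv φ = fun x => k / m ^ 2 * m * exp (m * x) + l := by
    rw [hφ, deriv_const_mul_exp_mul_add_mul_add]
  have hφ'' : deriv (deriv φ) = fun x => k / m ^ 2 * m * m * exp (m * x) := by
    rw [hφ', deriv_const_mul_exp_mul_add]
  intro t x y
  rw [hf_sep, pdtt_sepXY, pdtx_sepXY, pdty_sepXY, pdxx_sepXY, pdxy_sepXY, pdt_sepXY, pdyy_sepXY,
    pdx_sepXY, hφ'', hφ', hu', hv'', hn]
  refine ⟨rfl, rfl, rfl, deriv_const x m, by ring, by ring⟩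

/-- Case II of the paper's classification: the Walker manifold with metric
function `φ(x) = (k/m²)e^{mx} + lx + s` is a steady gradient ρ-Einstein
soliton with potential `f(t,x,y) = mx + (n/2)y² + py + r`, where `n = -lm/2`. -/
theorem walker_soliton_case_II
    (m k l s p r : ℝ) (hm : m ≠ 0) (n : ℝ) (hn : n = -(l * m) / 2)
    (φ : ℝ → ℝ) (hφ : φ = fun x => (k / m^2) * Real.exp (m * x) + l * x + s)
    (f : ℝ × ℝ × ℝ → ℝ)
    (hf : f = fun q => m * q.2.1 + (n/2) * q.2.2^2 + p * q.2.2 + r) :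
    ∀ t x y : ℝ,
      pdtt f t x y = 0 ∧
      pdtx f t x y = 0 ∧
      pdty f t x y = 0 ∧
      pdxx f t x y = 0 ∧
      pdxy f t x y - (1/2) * deriv φ x * pdt f t x y = 0 ∧
      -(1/2) * deriv (deriv φ) x + pdyy f t x y
          + (1/2) * deriv φ x * pdx f t x y = 0 * φ x :=
  walker_soliton_case_II_general m k l s p r n hn φ hφ f hf
end

section
/- (Existence of gradient ρ-Einstein solitons on Walker manifolds with affine metric function, Case I of the paper's classification.) Let a, b, β, γ, p, q ∈ ℝ with a·γ = 0. Define φ : ℝ → ℝ by φ(x) = a x + b and f : ℝ³ → ℝ by f(t,x,y) = γ t + β x − (a β/4)·y² + p y + q. Then the pair (f, φ) together with λ = 0 satisfies the system (E) at every point of ℝ³; i.e., the 3-dimensional Walker manifold with metric 2 dt dy + dx² + (a x + b) dy² is a steady gradient ρ-Einstein soliton with potential function f. -/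
/-!
The potential has constant `t`- and `x`-derivatives `γ` and `β`, and its `y`-derivative is affine
in `y`, so every second derivative except `f_yy = -aβ/2` vanishes. With `φ' = a` and `φ'' = 0`, the
fifth equation of (E) reduces to `aγ/2 = 0`, and in the sixth `f_yy` cancels `φ' f_x / 2 = aβ/2`.
-/

noncomputable def caseIPotential (a β γ p q : ℝ) (w : ℝ × ℝ × ℝ) : ℝ :=
  γ * w.1 + β * w.2.1 - (a * β / 4) * w.2.2 ^ 2 + p * w.2.2 + q

section caseIPotential

variable (a β γ p q t x y : ℝ)

theorem pdt_caseIPotential : pdt (caseIPotential a β γ p q) t x y = γ := by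
  simp [pdt, caseIPotential]

theorem pdx_caseIPotential : pdx (caseIPotential a β γ p q) t x y = β := by
  simp [pdx, caseIPotential]

theorem pdy_caseIPotential : pdy (caseIPotential a β γ p q) t x y = -(a * β / 2) * y + p := by
  have h : HasDerivAt (fun s => γ * t + β * x - (a * β / 4) * s ^ 2 + p * s + q)
      (-(a * β / 4 * (2 * y)) + p) y :=
    ((((hasDerivAt_pow 2 y).const_mul (a * β / 4)).const_sub (γ * t + β * x)).add
      ((hasDerivAt_id y).const_mul p |>.congr_deriv (mul_one p))).add_const q
      |>.congr_deriv (by simp)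
  simp only [pdy, caseIPotential]
  rw [h.deriv]
  ring

end caseIPotential

theorem deriv_mul_add_const (a b : ℝ) : deriv (fun x : ℝ => a * x + b) = fun _ => a := by
  funext x
  simp

/-- Case I of the paper's classification: the Walker manifold with affine
metric function `φ(x) = ax + b` is a steady gradient ρ-Einstein soliton with
potential `f(t,x,y) = γt + βx - (aβ/4)y² + py + q`, provided `a·γ = 0`. -/
theorem walker_soliton_case_I
    (a b β γ p q : ℝ) (haγ : a * γ = 0)
    (φ : ℝ → ℝ) (hφ : φ = fun x => a * x + b)
    (f : ℝ × ℝ × ℝ → ℝ)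
    (hf : f = fun w =>
      γ * w.1 + β * w.2.1 - (a * β / 4) * w.2.2^2 + p * w.2.2 + q) :
    ∀ t x y : ℝ,
      pdtt f t x y = 0 ∧
      pdtx f t x y = 0 ∧
      pdty f t x y = 0 ∧
      pdxx f t x y = 0 ∧
      pdxy f t x y - (1/2) * deriv φ x * pdt f t x y = 0 ∧
      -(1/2) * deriv (deriv φ) x + pdyy f t x y
          + (1/2) * deriv φ x * pdx f t x y = 0 * φ x := by
  obtain rfl : f = caseIPotential a β γ p q := hf
  subst hφ
  intro t x y
  simp only [pdtt, pdtx, pdty, pdxx, pdxy, pdyy, pdt_caseIPotential, pdx_caseIPotential,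
    pdy_caseIPotential, deriv_mul_add_const]
  refine ⟨deriv_const t γ, deriv_const x γ, deriv_const y γ, deriv_const x β, ?_, ?_⟩
  · simpa using haγ
  · rw [deriv_const']
    ring
end
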